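/- arXiv:2207.10534 — 2 statements merged into one kernel-verified Lean document; each statement's English description precedes it below -/
import Mathlib

section
/- Let P be a property and M1, M2 be communicating programs such that the alphabets αP, αM1 and αM2 contain no constraints. Then the weakest assumption A_w with respect to M1, M2 and P, with language L(A_w) = { w ∈ (αM2)* : M1 || w ⊨ P }, is regular. -/
/-!
Communicating programs (Frenkel, Grumberg, Păsăreanu, Sheinvald:
"Assume, Guarantee or Repair").

A communicating program is an automaton over an action alphabet consisting of
communication actions (reads `g?x`, writes `g!x`, and synchronized read/write
pairs), assignments `x := e`, and first-order constraints over valuations of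
the program variables.
-/

open scoped Classical

namespace AGR

/-- A single (one-sided) communication action: a read `g?x` or a write `g!x`
of variable `x` over channel `g`. -/
inductive CommAct (Chan Var : Type) where
  | read  : Chan → Var → CommAct Chan Var
  | write : Chan → Var → CommAct Chan Var

namespace CommAct

variable {Chan Var : Type}

/-- The channel of a communication action. -/
def chan : CommAct Chan Var → Chan
  | read g _ => g
  | write g _ => g

/-- The variable of a communication action. -/
def var : CommAct Chan Var → Var
  | read _ x => x
  | write _ x => x

end CommAct

/-- Two one-sided communication actions form a matching read/write pair:
one is a read and the other is a write, over the same channel. -/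
def rwPair {Chan Var : Type} : CommAct Chan Var → CommAct Chan Var → Prop
  | CommAct.read g _, CommAct.write g' _ => g = g'
  | CommAct.write g _, CommAct.read g' _ => g = g'
  | _, _ => False

/-- Letters of the action alphabet of a communicating program over channels
`Chan`, variables `Var` and data domain `D`:
communication actions (single reads/writes and synchronized pairs),
assignments `x := e`, and constraints (sets of valuations). -/
inductive Action (Chan Var D : Type) where
  | comm   : CommAct Chan Var → Action Chan Var D
  | sync   : CommAct Chan Var → CommAct Chan Var → Action Chan Var D
  | assign : Var → ((Var → D) → D) → Action Chan Var D
  | constr : Set (Var → D) → Action Chan Var D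

namespace Action

variable {Chan Var D : Type}

/-- `a` is a communication action (a single read/write or a synchronized pair). -/
def isComm : Action Chan Var D → Prop
  | comm _ => True
  | sync _ _ => True
  | _ => False

/-- `a` is an assignment. -/
def isAssign : Action Chan Var D → Prop
  | assign _ _ => True
  | _ => False

/-- `a` is a constraint. -/
def isConstraint : Action Chan Var D → Prop
  | constr _ => True
  | _ => False

/-- The channels occurring in an action. -/
def chans : Action Chan Var D → Set Chan
  | comm c => {c.chan}
  | sync c₁ c₂ => {c₁.chan, c₂.chan}
  | _ => ∅

/-- The action refers only to variables in `V`. -/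
def usesOnly (V : Set Var) : Action Chan Var D → Prop
  | comm c => c.var ∈ V
  | sync c₁ c₂ => c₁.var ∈ V ∧ c₂.var ∈ V
  | assign x e => x ∈ V ∧ ∀ β β' : Var → D, (∀ y ∈ V, β y = β' y) → e β = e β'
  | constr c => ∀ β β' : Var → D, (∀ y ∈ V, β y = β' y) → (β ∈ c ↔ β' ∈ c)

/-- The semantics of a single action on valuations:
`a.step β β'` holds when valuation `β'` may follow valuation `β` upon
performing `a`.  A read assigns an arbitrary value to the read variable;
a write changes nothing; a synchronized pair copies the written variable to
the read variable; an assignment updates the assigned variable; a constraint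
leaves the valuation unchanged and must be satisfied by it. -/
def step : Action Chan Var D → (Var → D) → (Var → D) → Prop
  | comm (CommAct.read _ x) => fun β β' => ∀ y, y ≠ x → β' y = β y
  | comm (CommAct.write _ _) => fun β β' => β' = β
  | sync (CommAct.read _ x) (CommAct.write _ y) => fun β β' =>
      β' x = β y ∧ ∀ z, z ≠ x → β' z = β z
  | sync (CommAct.write _ y) (CommAct.read _ x) => fun β β' =>
      β' x = β y ∧ ∀ z, z ≠ x → β' z = β z
  | sync _ _ => fun β β' => β' = β
  | assign x e => fun β β' => β' x = e β ∧ ∀ y, y ≠ x → β' y = β y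
  | constr c => fun β β' => β' = β ∧ β ∈ c

end Action

/-- `Exec β t β'` : the trace `t` has an execution starting in valuation `β`
and ending in valuation `β'`. -/
inductive Exec {Chan Var D : Type} :
    (Var → D) → List (Action Chan Var D) → (Var → D) → Prop where
  | nil (β : Var → D) : Exec β [] β
  | cons {β β' β'' : Var → D} {a : Action Chan Var D} {t : List (Action Chan Var D)} :
      a.step β β' → Exec β' t β'' → Exec β (a :: t) β''

/-- A trace is feasible if it has an execution. -/
def Feasible {Chan Var D : Type} (t : List (Action Chan Var D)) : Prop :=
  ∃ β β' : Var → D, Exec β t β'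

/-- Restriction of a single letter to a sub-alphabet `A`: letters in `A` are
kept; a synchronized pair (that is not itself in `A`) whose read or write
component is in `A` is replaced by that component; all other letters are
dropped. -/
noncomputable def restrictLetter {Chan Var D : Type} (A : Set (Action Chan Var D)) :
    Action Chan Var D → Option (Action Chan Var D)
  | Action.sync c₁ c₂ =>
      if Action.sync c₁ c₂ ∈ A then some (Action.sync c₁ c₂)
      else if Action.comm c₁ ∈ A then some (Action.comm c₁)
      else if Action.comm c₂ ∈ A then some (Action.comm c₂)
      else none
  | a => if a ∈ A then some a else none

/-- The restriction `t↓A` of a trace `t` to a sub-alphabet `A`. -/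
noncomputable def restrict {Chan Var D : Type} (A : Set (Action Chan Var D))
    (t : List (Action Chan Var D)) : List (Action Chan Var D) :=
  t.filterMap (restrictLetter A)

/-- A communicating program: states `Q` with an initial state, a transition
relation labeled by actions, a set of accepting states, an action alphabet,
and a set of program variables. -/
structure Program (Q Chan Var D : Type) where
  init : Q
  tr : Q → Action Chan Var D → Q → Prop
  acc : Set Q
  alph : Set (Action Chan Var D)
  vars : Set Var

namespace Program

variable {Q Chan Var D : Type}

/-- Well-formedness of a communicating program: transitions are labeled by
alphabet letters, alphabet letters refer only to the program variables, and
the alphabet and the variable set are finite. -/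
def Good (M : Program Q Chan Var D) : Prop :=
  (∀ q a q', M.tr q a q' → a ∈ M.alph) ∧
  (∀ a ∈ M.alph, a.usesOnly M.vars) ∧
  M.alph.Finite ∧ M.vars.Finite

/-- `M.Reach q t` : there is a run of `M` from the initial state to `q`
whose induced trace is `t`. -/
inductive Reach (M : Program Q Chan Var D) : Q → List (Action Chan Var D) → Prop where
  | nil : Reach M M.init []
  | snoc {q : Q} {t : List (Action Chan Var D)} {a : Action Chan Var D} {q' : Q} :
      Reach M q t → M.tr q a q' → Reach M q' (t ++ [a])

/-- `t` is a trace of `M` (induced by some run of `M`). -/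
def IsTrace (M : Program Q Chan Var D) (t : List (Action Chan Var D)) : Prop :=
  ∃ q : Q, M.Reach q t

/-- `T(M)`: the set of accepted traces of `M`. -/
def AccTraces (M : Program Q Chan Var D) : Set (List (Action Chan Var D)) :=
  {t | ∃ q ∈ M.acc, M.Reach q t}

/-- The set of channels occurring in actions of `M`. -/
def channels (M : Program Q Chan Var D) : Set Chan :=
  ⋃ a ∈ M.alph, a.chans

end Program

/-- The interface alphabet of `M₁` and `M₂`: all single communication actions
over channels common to both components. -/
def interface {Q₁ Q₂ Chan Var D : Type}
    (M₁ : Program Q₁ Chan Var D) (M₂ : Program Q₂ Chan Var D) :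
    Set (Action Chan Var D) :=
  {a | ∃ c : CommAct Chan Var, a = Action.comm c ∧
      c.chan ∈ M₁.channels ∧ c.chan ∈ M₂.channels}

/-- Transitions of the parallel composition `M₁ ‖ M₂`.  The two components
synchronize on matching read/write interface actions (moving through an
intermediate primed state from which the equality constraint between the two
involved variables is taken), and interleave on all other actions. -/
inductive ParTrans {Q₁ Q₂ Chan Var D : Type}
    (M₁ : Program Q₁ Chan Var D) (M₂ : Program Q₂ Chan Var D) :
    ((Q₁ × Q₂) ⊕ (Q₁ × Q₂ × Var × Var)) → Action Chan Var D →
    ((Q₁ × Q₂) ⊕ (Q₁ × Q₂ × Var × Var)) → Prop where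
  | sync {q₁ p₁ : Q₁} {q₂ p₂ : Q₂} {c₁ c₂ : CommAct Chan Var} :
      Action.comm c₁ ∈ M₁.alph → Action.comm c₁ ∈ interface M₁ M₂ →
      Action.comm c₂ ∈ M₂.alph → Action.comm c₂ ∈ interface M₁ M₂ →
      rwPair c₁ c₂ →
      M₁.tr q₁ (Action.comm c₁) p₁ → M₂.tr q₂ (Action.comm c₂) p₂ →
      ParTrans M₁ M₂ (Sum.inl (q₁, q₂)) (Action.sync c₁ c₂)
        (Sum.inr (p₁, p₂, c₁.var, c₂.var))
  | eqc {p₁ : Q₁} {p₂ : Q₂} {x₁ x₂ : Var} :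
      ParTrans M₁ M₂ (Sum.inr (p₁, p₂, x₁, x₂))
        (Action.constr {β | β x₁ = β x₂}) (Sum.inl (p₁, p₂))
  | left {q₁ p₁ : Q₁} {q₂ : Q₂} {a : Action Chan Var D} :
      a ∈ M₁.alph → a ∉ interface M₁ M₂ → M₁.tr q₁ a p₁ →
      ParTrans M₁ M₂ (Sum.inl (q₁, q₂)) a (Sum.inl (p₁, q₂))
  | right {q₁ : Q₁} {q₂ p₂ : Q₂} {a : Action Chan Var D} :
      a ∈ M₂.alph → a ∉ interface M₁ M₂ → M₂.tr q₂ a p₂ →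
      ParTrans M₁ M₂ (Sum.inl (q₁, q₂)) a (Sum.inl (q₁, p₂))

/-- The parallel composition `M₁ ‖ M₂` of two communicating programs. -/
def parallel {Q₁ Q₂ Chan Var D : Type}
    (M₁ : Program Q₁ Chan Var D) (M₂ : Program Q₂ Chan Var D) :
    Program ((Q₁ × Q₂) ⊕ (Q₁ × Q₂ × Var × Var)) Chan Var D where
  init := Sum.inl (M₁.init, M₂.init)
  tr := ParTrans M₁ M₂
  acc := {s | ∃ q₁ ∈ M₁.acc, ∃ q₂ ∈ M₂.acc, s = Sum.inl (q₁, q₂)}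
  alph :=
    {a | ∃ c₁ c₂ : CommAct Chan Var, a = Action.sync c₁ c₂ ∧
        Action.comm c₁ ∈ M₁.alph ∧ Action.comm c₁ ∈ interface M₁ M₂ ∧
        Action.comm c₂ ∈ M₂.alph ∧ Action.comm c₂ ∈ interface M₁ M₂ ∧
        rwPair c₁ c₂}
    ∪ ((M₁.alph ∪ M₂.alph) \ interface M₁ M₂)
    ∪ {a | ∃ x₁ ∈ M₁.vars, ∃ x₂ ∈ M₂.vars, a = Action.constr {β | β x₁ = β x₂}}
  vars := M₁.vars ∪ M₂.vars

/-- The interface of `M` and a property `P`: the communication actions common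
to both alphabets. -/
def cInterface {QM QP Chan Var D : Type}
    (M : Program QM Chan Var D) (P : Program QP Chan Var D) :
    Set (Action Chan Var D) :=
  {a | a.isComm ∧ a ∈ M.alph ∧ a ∈ P.alph}

/-- Transitions of the conjunctive composition `M × P`: the components
synchronize on common communication actions and interleave on all other
actions. -/
inductive ConjTrans {QM QP Chan Var D : Type}
    (M : Program QM Chan Var D) (P : Program QP Chan Var D) :
    QM × QP → Action Chan Var D → QM × QP → Prop where
  | sync {q₁ p₁ : QM} {q₂ p₂ : QP} {a : Action Chan Var D} :
      a ∈ cInterface M P → M.tr q₁ a p₁ → P.tr q₂ a p₂ →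
      ConjTrans M P (q₁, q₂) a (p₁, p₂)
  | left {q₁ p₁ : QM} {q₂ : QP} {a : Action Chan Var D} :
      a ∈ M.alph → a ∉ cInterface M P → M.tr q₁ a p₁ →
      ConjTrans M P (q₁, q₂) a (p₁, q₂)
  | right {q₁ : QM} {q₂ p₂ : QP} {a : Action Chan Var D} :
      a ∈ P.alph → a ∉ cInterface M P → P.tr q₂ a p₂ →
      ConjTrans M P (q₁, q₂) a (q₁, p₂)

/-- The conjunctive composition `M × P` of a program and a property; its
accepting states are pairs of an accepting state of `M` and a rejecting
(non-accepting) state of `P`. -/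
def conj {QM QP Chan Var D : Type}
    (M : Program QM Chan Var D) (P : Program QP Chan Var D) :
    Program (QM × QP) Chan Var D where
  init := (M.init, P.init)
  tr := ConjTrans M P
  acc := {s | s.1 ∈ M.acc ∧ s.2 ∉ P.acc}
  alph := M.alph ∪ P.alph
  vars := M.vars

/-- `P` is a property: a deterministic and complete communicating program
without assignment actions.  Semantic determinism: distinct constraints
leaving a state towards distinct successors are mutually contradictory.
Semantic completeness: whenever some constraint leaves a state, the
constraints leaving that state cover all valuations. -/
structure IsProperty {Q Chan Var D : Type} (P : Program Q Chan Var D) : Prop where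
  no_assign : ∀ a ∈ P.alph, ¬ a.isAssign
  complete : ∀ q : Q, ∀ a ∈ P.alph, ∃ q' : Q, P.tr q a q'
  deterministic : ∀ (q : Q) (a : Action Chan Var D) (q' q'' : Q),
      P.tr q a q' → P.tr q a q'' → q' = q''
  sem_det : ∀ (q : Q) (c₁ c₂ : Set (Var → D)) (q' q'' : Q),
      P.tr q (Action.constr c₁) q' → P.tr q (Action.constr c₂) q'' →
      c₁ ≠ c₂ → q' ≠ q'' → c₁ ∩ c₂ = ∅
  sem_complete : ∀ q : Q, (∃ (c : Set (Var → D)) (q' : Q), P.tr q (Action.constr c) q') →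
      ∀ β : Var → D, ∃ (c : Set (Var → D)) (q' : Q), P.tr q (Action.constr c) q' ∧ β ∈ c

/-- `M ⊨ P` : the conjunctive composition `M × P` has no feasible accepted
trace. -/
def Sat {QM QP Chan Var D : Type}
    (M : Program QM Chan Var D) (P : Program QP Chan Var D) : Prop :=
  ∀ t ∈ (conj M P).AccTraces, ¬ Feasible t

/-- `M_w`: the communicating program that follows exactly the trace `w` and
has no other transitions. -/
def traceProgram {Chan Var D : Type} (w : List (Action Chan Var D)) :
    Program (Fin (w.length + 1)) Chan Var D where
  init := 0
  tr := fun i a j => ∃ h : (i : ℕ) < w.length, a = w.get ⟨(i : ℕ), h⟩ ∧ (j : ℕ) = (i : ℕ) + 1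
  acc := {Fin.last w.length}
  alph := {a | a ∈ w}
  vars := Set.univ

/-- A language of finite words is regular if it is the language of some
finite (deterministic) automaton. -/
def IsRegularLang {A : Type} (L : Set (List A)) : Prop :=
  ∃ (σ : Type) (_ : Fintype σ) (M : DFA A σ), ∀ w : List A, w ∈ M.accepts ↔ w ∈ L


/-!
Without constraints in `M₁`, `M_w` and `P`, the only constraints of `(M₁ ‖ M_w) × P` are the
equality constraints that follow synchronisations, and such a constraint holds if it is taken
right after its synchronisation, which copies the written value into the read variable. So
`M₁ ‖ w ⊨ P` fails iff some accepting state of `(M₁ ‖ M_w) × P` is reachable at all, and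
forgetting the position in `w` turns this into acceptance of `w` by a finite ε-NFA on `Q₁ × QP`.
That automaton depends on `w` only through its set of letters, a subset of the finite alphabet
`αM₂`, so the weakest assumption is a finite union of intersections of regular languages.
-/

end AGR

namespace εNFA

variable {α σ : Type} (M : εNFA α σ) {S : Set σ} {s t : σ} {x : List α} {a : α}

theorem mem_evalFrom_of_mem_step_none (hs : s ∈ M.evalFrom S x) (ht : t ∈ M.step s none) :
    t ∈ M.evalFrom S x := by
  rcases x.eq_nil_or_concat' with rfl | ⟨x, b, rfl⟩
  · exact εClosure.step s t ht hs
  · rw [evalFrom_append_singleton, mem_stepSet_iff] at hs ⊢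
    obtain ⟨u, hu, hs⟩ := hs
    exact ⟨u, hu, εClosure.step s t ht hs⟩

theorem mem_evalFrom_append_singleton_of_mem_step (hs : s ∈ M.evalFrom S x)
    (ht : t ∈ M.step s (some a)) : t ∈ M.evalFrom S (x ++ [a]) := by
  rw [evalFrom_append_singleton, mem_stepSet_iff]
  exact ⟨s, hs, subset_εClosure _ _ ht⟩

theorem isRegular_accepts [Finite σ] : M.accepts.IsRegular := by
  have := Fintype.ofFinite σ
  exact ⟨Set σ, inferInstance, M.toNFA.toDFA, by rw [NFA.toDFA_correct, toNFA_correct]⟩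

end εNFA

namespace Language

variable {α : Type}

theorem isRegular_bot : (⊥ : Language α).IsRegular :=
  ⟨Unit, inferInstance, ⟨fun _ _ => (), (), ∅⟩, bot_unique fun _ h => h.elim⟩

theorem isRegular_setOf_forall_mem (p : α → Prop) : IsRegular {w : List α | ∀ a ∈ w, p a} := by
  let M : DFA α Bool := ⟨fun b a => b && decide (p a), true, {true}⟩
  have hM : ∀ b w, M.evalFrom b w = (b && decide (∀ a ∈ w, p a)) := by
    intro b w
    induction w generalizing b with
    | nil => simp
    | cons a w ih => simp [M, ih, Bool.and_assoc]
  refine ⟨Bool, inferInstance, M, ?_⟩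
  ext w
  simp only [DFA.mem_accepts, DFA.eval, hM, M, Bool.true_and, Set.mem_singleton_iff,
    decide_eq_true_eq]
  exact Iff.rfl

theorem isRegular_setOf_mem (a : α) : IsRegular {w : List α | a ∈ w} := by
  have h : {w : List α | a ∈ w} = {w : List α | ∀ b ∈ w, b ≠ a}ᶜ := by
    ext w
    simp
  rw [h]
  exact (isRegular_setOf_forall_mem _).compl

theorem isRegular_setOf_forall_mem_iff (s : Finset α) :
    IsRegular {w : List α | ∀ a, a ∈ w ↔ a ∈ s} := by
  have h : {w : List α | ∀ a, a ∈ w ↔ a ∈ s} =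
      {w : List α | ∀ a ∈ w, a ∈ s} ⊓ s.inf fun a => {w : List α | a ∈ w} := by
    ext w
    simp [Finset.inf_eq_iInf, iff_def, forall_and]
  rw [h]
  exact (isRegular_setOf_forall_mem _).inf <|
    Finset.inf_induction (compl_bot (α := Language α) ▸ isRegular_bot.compl)
      (fun _ h₁ _ h₂ => h₁.inf h₂) fun a _ => isRegular_setOf_mem a

theorem isRegular_setOf_forall_mem_and_mem {K : Set α} (hK : K.Finite)
    (G : List α → Language α) (hG : ∀ u v : List α, (∀ a, a ∈ u ↔ a ∈ v) → G u = G v)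
    (hreg : ∀ u, (G u).IsRegular) : IsRegular {w | (∀ a ∈ w, a ∈ K) ∧ w ∈ G w} := by
  have h : {w | (∀ a ∈ w, a ∈ K) ∧ w ∈ G w} =
      hK.toFinset.powerset.sup fun s => {w | ∀ a, a ∈ w ↔ a ∈ s} ⊓ G s.toList := by
    apply le_antisymm
    · rintro w ⟨hwK, hw⟩
      refine Finset.le_sup (f := fun s => {w | ∀ a, a ∈ w ↔ a ∈ s} ⊓ G s.toList)
        (Finset.mem_powerset.2 fun a ha => ?_) ⟨fun a => List.mem_toFinset.symm, ?_⟩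
      · simpa using hwK a (List.mem_toFinset.1 ha)
      · rwa [← hG w _ (by simp)]
    · refine Finset.sup_le fun s hs w ⟨hws, hw⟩ => ⟨fun a ha => ?_, ?_⟩
      · simpa using Finset.mem_powerset.1 hs ((hws a).1 ha)
      · rwa [hG w s.toList (by simpa using hws)]
  rw [h]
  exact Finset.sup_induction isRegular_bot (fun _ h₁ _ h₂ => h₁.add h₂)
    fun s _ => (isRegular_setOf_forall_mem_iff s).inf (hreg _)

end Language

namespace AGR

variable {Q Q₁ Q₂ QP Chan Var D : Type}

namespace Action

theorem not_isConstraint_of_isComm {a : Action Chan Var D} (h : a.isComm) :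
    ¬ a.isConstraint := by
  cases a <;> simp_all [isComm, isConstraint]

theorem usesOnly_univ (a : Action Chan Var D) : a.usesOnly Set.univ := by
  cases a with
  | comm c => trivial
  | sync c₁ c₂ => exact ⟨trivial, trivial⟩
  | assign x e => exact ⟨trivial, fun β β' h => congrArg e (funext fun y => h y trivial)⟩
  | constr c => exact fun β β' h => by rw [funext fun y => h y trivial]

theorem exists_step {a : Action Chan Var D} (ha : ¬ a.isConstraint) (β : Var → D) :
    ∃ β', a.step β β' := by
  match a, ha with
  | comm (.read _ _), _ => exact ⟨β, fun _ _ => rfl⟩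
  | comm (.write _ _), _ => exact ⟨β, rfl⟩
  | sync (.read _ x) (.write _ y), _ =>
    exact ⟨Function.update β x (β y), by simp, fun z hz => Function.update_of_ne hz _ _⟩
  | sync (.write _ y) (.read _ x), _ =>
    exact ⟨Function.update β x (β y), by simp, fun z hz => Function.update_of_ne hz _ _⟩
  | sync (.read _ _) (.read _ _), _ => exact ⟨β, rfl⟩
  | sync (.write _ _) (.write _ _), _ => exact ⟨β, rfl⟩
  | assign x e, _ =>
    exact ⟨Function.update β x (e β), by simp, fun z hz => Function.update_of_ne hz _ _⟩
  | constr _, h => exact absurd trivial h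

theorem exists_step_sync {c₁ c₂ : CommAct Chan Var} (h : rwPair c₁ c₂) (β : Var → D) :
    ∃ β', (sync c₁ c₂ : Action Chan Var D).step β β' ∧ β' c₁.var = β' c₂.var := by
  match c₁, c₂, h with
  | .read _ x, .write _ y, _ =>
    exact ⟨Function.update β x (β y), ⟨by simp, fun z hz => Function.update_of_ne hz _ _⟩,
      by simp [CommAct.var, Function.update_apply]⟩
  | .write _ y, .read _ x, _ =>
    exact ⟨Function.update β x (β y), ⟨by simp, fun z hz => Function.update_of_ne hz _ _⟩,
      by simp [CommAct.var, Function.update_apply]⟩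

end Action

theorem Exec.snoc {β β' β'' : Var → D} {t : List (Action Chan Var D)} {a : Action Chan Var D}
    (ht : Exec β t β') (ha : a.step β' β'') : Exec β (t ++ [a]) β'' := by
  induction ht with
  | nil => exact .cons ha (.nil _)
  | cons hs _ ih => exact .cons hs (ih ha)

theorem sat_of_isEmpty [IsEmpty (Var → D)] (M : Program Q Chan Var D)
    (P : Program QP Chan Var D) : Sat M P :=
  fun _ _ ⟨β, _⟩ => isEmptyElim β

namespace Program

def FeasiblyReaches (M : Program Q Chan Var D) (x : Q) : Prop :=
  ∃ t, M.Reach x t ∧ Feasible t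

theorem feasiblyReaches_init [Nonempty (Var → D)] (M : Program Q Chan Var D) :
    M.FeasiblyReaches M.init :=
  ⟨[], .nil, Classical.arbitrary _, _, .nil _⟩

variable {M : Program Q Chan Var D} {x y z : Q}

theorem FeasiblyReaches.tail {a : Action Chan Var D} (hx : M.FeasiblyReaches x)
    (hxy : M.tr x a y) (ha : ¬ a.isConstraint) : M.FeasiblyReaches y := by
  obtain ⟨t, hr, β, β', he⟩ := hx
  obtain ⟨β'', hs⟩ := a.exists_step ha β'
  exact ⟨_, hr.snoc hxy, β, β'', he.snoc hs⟩

theorem FeasiblyReaches.tail_sync_constr {c₁ c₂ : CommAct Chan Var}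
    (hx : M.FeasiblyReaches x) (hc : rwPair c₁ c₂) (hxy : M.tr x (.sync c₁ c₂) y)
    (hyz : M.tr y (.constr {β | β c₁.var = β c₂.var}) z) : M.FeasiblyReaches z := by
  obtain ⟨t, hr, β, β', he⟩ := hx
  obtain ⟨β'', hs, heq⟩ := Action.exists_step_sync hc β'
  exact ⟨_, (hr.snoc hxy).snoc hyz, β, β'', (he.snoc hs).snoc ⟨rfl, heq⟩⟩

/-- The move of a property `P` in a conjunctive composition when the other component performs
`a`, provided all letters of `P` are communication actions. -/
def React (P : Program QP Chan Var D) (a : Action Chan Var D) (p p' : QP) : Prop :=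
  (a ∈ P.alph ∧ P.tr p a p') ∨ (a ∉ P.alph ∧ p' = p)

end Program

theorem IsProperty.isComm_of_mem_alph {P : Program QP Chan Var D} (hP : IsProperty P)
    (hc : ∀ a ∈ P.alph, ¬ a.isConstraint) {a : Action Chan Var D} (ha : a ∈ P.alph) :
    a.isComm := by
  cases a with
  | comm c => trivial
  | sync c₁ c₂ => trivial
  | assign x e => exact absurd trivial (hP.no_assign _ ha)
  | constr c => exact absurd trivial (hc _ ha)

theorem conj_tr_iff {M : Program Q Chan Var D} {P : Program QP Chan Var D}
    (hP : ∀ a ∈ P.alph, a.isComm) {q q' : Q} {p p' : QP} {a : Action Chan Var D} :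
    (conj M P).tr (q, p) a (q', p') ↔
      (a ∈ M.alph ∧ M.tr q a q' ∧ P.React a p p') ∨
        (a ∈ P.alph ∧ a ∉ M.alph ∧ q' = q ∧ P.tr p a p') := by
  constructor
  · rintro (⟨⟨-, hM, hPa⟩, hq, hp⟩ | ⟨hM, hI, hq⟩ | ⟨hPa, hI, hp⟩)
    · exact .inl ⟨hM, hq, .inl ⟨hPa, hp⟩⟩
    · exact .inl ⟨hM, hq, .inr ⟨fun hPa => hI ⟨hP _ hPa, hM, hPa⟩, rfl⟩⟩
    · exact .inr ⟨hPa, fun hM => hI ⟨hP _ hPa, hM, hPa⟩, rfl, hp⟩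
  · rintro (⟨hM, hq, ⟨hPa, hp⟩ | ⟨hPa, rfl⟩⟩ | ⟨hPa, hM, rfl, hp⟩)
    · exact .sync ⟨hP _ hPa, hM, hPa⟩ hq hp
    · exact .left hM (fun hI => hPa hI.2.2) hq
    · exact .right hPa (fun hI => hM hI.2.1) hp

section Parallel

variable {Q₂' : Type} {M₁ : Program Q₁ Chan Var D} {M₂ : Program Q₂ Chan Var D}

theorem interface_congr {M₂' : Program Q₂' Chan Var D} (h : M₂.alph = M₂'.alph) :
    interface M₁ M₂ = interface M₁ M₂' := by
  simp only [interface, Program.channels, h]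

theorem parallel_alph_congr {M₂' : Program Q₂' Chan Var D} (h : M₂.alph = M₂'.alph)
    (hv : M₂.vars = M₂'.vars) : (parallel M₁ M₂).alph = (parallel M₁ M₂').alph := by
  simp only [parallel, interface_congr h, h, hv]

theorem mem_parallel_alph_of_left {a : Action Chan Var D} (ha : a ∈ M₁.alph)
    (hI : a ∉ interface M₁ M₂) : a ∈ (parallel M₁ M₂).alph :=
  .inl (.inr ⟨.inl ha, hI⟩)

theorem mem_parallel_alph_of_right {a : Action Chan Var D} (ha : a ∈ M₂.alph)
    (hI : a ∉ interface M₁ M₂) : a ∈ (parallel M₁ M₂).alph :=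
  .inl (.inr ⟨.inr ha, hI⟩)

theorem sync_mem_parallel_alph {c₁ c₂ : CommAct Chan Var} (h₁ : .comm c₁ ∈ M₁.alph)
    (hI₁ : .comm c₁ ∈ interface M₁ M₂) (h₂ : .comm c₂ ∈ M₂.alph)
    (hI₂ : .comm c₂ ∈ interface M₁ M₂) (hc : rwPair c₁ c₂) :
    .sync c₁ c₂ ∈ (parallel M₁ M₂).alph :=
  .inl (.inl ⟨c₁, c₂, rfl, h₁, hI₁, h₂, hI₂, hc⟩)

theorem constr_mem_parallel_alph {x₁ x₂ : Var} (h₁ : x₁ ∈ M₁.vars) (h₂ : x₂ ∈ M₂.vars) :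
    .constr {β : Var → D | β x₁ = β x₂} ∈ (parallel M₁ M₂).alph :=
  .inr ⟨x₁, h₁, x₂, h₂, rfl⟩

def parallelLeft : (Q₁ × Q₂) ⊕ (Q₁ × Q₂ × Var × Var) → Q₁ :=
  Sum.elim Prod.fst Prod.fst

def parallelRight : (Q₁ × Q₂) ⊕ (Q₁ × Q₂ × Var × Var) → Q₂ :=
  Sum.elim Prod.snd fun s => s.2.1

end Parallel

section Collapsed

variable (M₁ : Program Q₁ Chan Var D) (P : Program QP Chan Var D)
  (I N : Set (Action Chan Var D))

/-- The conjunctive composition `(M₁ ‖ M₂) × P` with the state of `M₂` forgotten: it reads the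
trace of `M₂`, and `I`, `N` stand for the interface `interface M₁ M₂` and the alphabet of
`M₁ ‖ M₂`. A synchronisation leads directly to the state after its equality constraint. -/
inductive CollapsedStep : Q₁ × QP → Option (Action Chan Var D) → Q₁ × QP → Prop
  | left {q q' : Q₁} {p p' : QP} {a : Action Chan Var D} :
      a ∈ M₁.alph → a ∉ I → M₁.tr q a q' → P.React a p p' → CollapsedStep (q, p) none (q', p')
  | prop {q : Q₁} {p p' : QP} {a : Action Chan Var D} :
      a ∈ P.alph → a ∉ N → P.tr p a p' → CollapsedStep (q, p) none (q, p')
  | right {q : Q₁} {p p' : QP} {b : Action Chan Var D} :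
      b ∉ I → P.React b p p' → CollapsedStep (q, p) (some b) (q, p')
  | sync {q q' : Q₁} {p p' : QP} {c₁ c₂ : CommAct Chan Var} :
      .comm c₁ ∈ M₁.alph → .comm c₁ ∈ I → .comm c₂ ∈ I → rwPair c₁ c₂ →
      M₁.tr q (.comm c₁) q' → P.React (.sync c₁ c₂) p p' →
      CollapsedStep (q, p) (some (.comm c₂)) (q', p')

def collapsed : εNFA (Action Chan Var D) (Q₁ × QP) where
  step s a := {s' | CollapsedStep M₁ P I N s a s'}
  start := {(M₁.init, P.init)}
  accept := {s | s.1 ∈ M₁.acc ∧ s.2 ∉ P.acc}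

end Collapsed

abbrev collapsedParallel (M₁ : Program Q₁ Chan Var D) (M₂ : Program Q₂ Chan Var D)
    (P : Program QP Chan Var D) : εNFA (Action Chan Var D) (Q₁ × QP) :=
  collapsed M₁ P (interface M₁ M₂) (parallel M₁ M₂).alph

section Simulation

variable {M₁ : Program Q₁ Chan Var D} {M₂ : Program Q₂ Chan Var D} {P : Program QP Chan Var D}

theorem exists_reach_mem_collapsedParallel_eval_of_tr (hP : ∀ a ∈ P.alph, a.isComm)
    {s s' : (Q₁ × Q₂) ⊕ (Q₁ × Q₂ × Var × Var)} {p p' : QP} {a : Action Chan Var D}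
    (hss' : (conj (parallel M₁ M₂) P).tr (s, p) a (s', p')) {u : List (Action Chan Var D)}
    (hu : M₂.Reach (parallelRight s) u)
    (hs : (parallelLeft s, p) ∈ (collapsedParallel M₁ M₂ P).eval u) :
    ∃ u', M₂.Reach (parallelRight s') u' ∧
      (parallelLeft s', p') ∈ (collapsedParallel M₁ M₂ P).eval u' := by
  rcases (conj_tr_iff hP).1 hss' with ⟨-, hpar, hreact⟩ | ⟨hPa, hN, rfl, hp⟩
  · cases hpar with
    | sync hm₁ hI₁ _ hI₂ hc hq₁ hq₂ =>
      exact ⟨_, hu.snoc hq₂, εNFA.mem_evalFrom_append_singleton_of_mem_step _ hs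
        (.sync hm₁ hI₁ hI₂ hc hq₁ hreact)⟩
    | eqc =>
      obtain rfl : p' = p := (hreact.resolve_left fun h => hP _ h.1).2
      exact ⟨u, hu, hs⟩
    | left ha hI hq =>
      exact ⟨u, hu, εNFA.mem_evalFrom_of_mem_step_none _ hs (.left ha hI hq hreact)⟩
    | right _ hI hq =>
      exact ⟨_, hu.snoc hq,
        εNFA.mem_evalFrom_append_singleton_of_mem_step _ hs (.right hI hreact)⟩
  · exact ⟨u, hu, εNFA.mem_evalFrom_of_mem_step_none _ hs (.prop hPa hN hp)⟩

theorem exists_reach_mem_collapsedParallel_eval (hP : ∀ a ∈ P.alph, a.isComm)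
    {x : ((Q₁ × Q₂) ⊕ (Q₁ × Q₂ × Var × Var)) × QP} {t : List (Action Chan Var D)}
    (hx : (conj (parallel M₁ M₂) P).Reach x t) :
    ∃ u, M₂.Reach (parallelRight x.1) u ∧
      (parallelLeft x.1, x.2) ∈ (collapsedParallel M₁ M₂ P).eval u := by
  induction hx with
  | nil => exact ⟨[], .nil, εNFA.subset_εClosure _ _ rfl⟩
  | snoc _ hxy ih =>
    obtain ⟨u, hu, hs⟩ := ih
    exact exists_reach_mem_collapsedParallel_eval_of_tr hP hxy hu hs

end Simulation

section Realization

variable {M₁ : Program Q₁ Chan Var D} {M₂ : Program Q₂ Chan Var D} {P : Program QP Chan Var D}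
  {q₂ q₂' : Q₂} {s s' : Q₁ × QP}

theorem feasiblyReaches_of_mem_step_none (hP : ∀ a ∈ P.alph, a.isComm)
    (hc₁ : ∀ a ∈ M₁.alph, ¬ a.isConstraint)
    (hs : (conj (parallel M₁ M₂) P).FeasiblyReaches (.inl (s.1, q₂), s.2))
    (hss' : s' ∈ (collapsedParallel M₁ M₂ P).step s none) :
    (conj (parallel M₁ M₂) P).FeasiblyReaches (.inl (s'.1, q₂), s'.2) := by
  cases hss' with
  | left ha hI hq hreact =>
    exact hs.tail ((conj_tr_iff hP).2
      (.inl ⟨mem_parallel_alph_of_left ha hI, .left ha hI hq, hreact⟩)) (hc₁ _ ha)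
  | prop hPa hN hp =>
    exact hs.tail ((conj_tr_iff hP).2 (.inr ⟨hPa, hN, rfl, hp⟩))
      (Action.not_isConstraint_of_isComm (hP _ hPa))

theorem feasiblyReaches_of_mem_step_some (hP : ∀ a ∈ P.alph, a.isComm)
    (h₁ : ∀ a ∈ M₁.alph, a.usesOnly M₁.vars) {b : Action Chan Var D} (hb : b ∈ M₂.alph)
    (hbc : ¬ b.isConstraint) (hbv : b.usesOnly M₂.vars)
    (hs : (conj (parallel M₁ M₂) P).FeasiblyReaches (.inl (s.1, q₂), s.2))
    (hq₂ : M₂.tr q₂ b q₂') (hss' : s' ∈ (collapsedParallel M₁ M₂ P).step s (some b)) :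
    (conj (parallel M₁ M₂) P).FeasiblyReaches (.inl (s'.1, q₂'), s'.2) := by
  cases hss' with
  | right hI hreact =>
    exact hs.tail ((conj_tr_iff hP).2
      (.inl ⟨mem_parallel_alph_of_right hb hI, .right hb hI hq₂, hreact⟩)) hbc
  | sync hm₁ hI₁ hI₂ hc hq₁ hreact =>
    refine hs.tail_sync_constr hc
      ((conj_tr_iff hP).2 (.inl ⟨?_, .sync hm₁ hI₁ hb hI₂ hc hq₁ hq₂, hreact⟩))
      ((conj_tr_iff hP).2 (.inl ⟨?_, .eqc, .inr ⟨fun h => hP _ h, rfl⟩⟩))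
    · exact sync_mem_parallel_alph hm₁ hI₁ hb hI₂ hc
    · exact constr_mem_parallel_alph (h₁ _ hm₁) hbv

theorem feasiblyReaches_of_mem_εClosure (hP : ∀ a ∈ P.alph, a.isComm)
    (hc₁ : ∀ a ∈ M₁.alph, ¬ a.isConstraint) {S : Set (Q₁ × QP)}
    (hS : ∀ s ∈ S, (conj (parallel M₁ M₂) P).FeasiblyReaches (.inl (s.1, q₂), s.2))
    (hs : s ∈ (collapsedParallel M₁ M₂ P).εClosure S) :
    (conj (parallel M₁ M₂) P).FeasiblyReaches (.inl (s.1, q₂), s.2) := by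
  induction hs with
  | base s hs => exact hS s hs
  | step s t hst _ ih => exact feasiblyReaches_of_mem_step_none hP hc₁ ih hst

theorem feasiblyReaches_of_mem_collapsedParallel_eval [Nonempty (Var → D)]
    (hP : ∀ a ∈ P.alph, a.isComm) (h₁ : ∀ a ∈ M₁.alph, a.usesOnly M₁.vars)
    (hc₁ : ∀ a ∈ M₁.alph, ¬ a.isConstraint) (h₂ : ∀ q a q', M₂.tr q a q' → a ∈ M₂.alph)
    (hv₂ : ∀ a ∈ M₂.alph, a.usesOnly M₂.vars) (hc₂ : ∀ a ∈ M₂.alph, ¬ a.isConstraint)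
    {u : List (Action Chan Var D)} (hu : M₂.Reach q₂ u)
    (hs : s ∈ (collapsedParallel M₁ M₂ P).eval u) :
    (conj (parallel M₁ M₂) P).FeasiblyReaches (.inl (s.1, q₂), s.2) := by
  induction hu generalizing s with
  | nil =>
    refine feasiblyReaches_of_mem_εClosure hP hc₁ ?_ hs
    rintro _ rfl
    exact Program.feasiblyReaches_init _
  | snoc _ hq ih =>
    rw [εNFA.eval_append_singleton, εNFA.mem_stepSet_iff] at hs
    obtain ⟨t, ht, hs⟩ := hs
    have hb := h₂ _ _ _ hq
    exact feasiblyReaches_of_mem_εClosure hP hc₁ (fun s' hs' =>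
      feasiblyReaches_of_mem_step_some hP h₁ hb (hc₂ _ hb) (hv₂ _ hb) (ih ht) hq hs') hs

theorem sat_parallel_iff [Nonempty (Var → D)]
    (hP : ∀ a ∈ P.alph, a.isComm) (h₁ : ∀ a ∈ M₁.alph, a.usesOnly M₁.vars)
    (hc₁ : ∀ a ∈ M₁.alph, ¬ a.isConstraint) (h₂ : ∀ q a q', M₂.tr q a q' → a ∈ M₂.alph)
    (hv₂ : ∀ a ∈ M₂.alph, a.usesOnly M₂.vars) (hc₂ : ∀ a ∈ M₂.alph, ¬ a.isConstraint) :
    Sat (parallel M₁ M₂) P ↔ ∀ u ∈ M₂.AccTraces, u ∉ (collapsedParallel M₁ M₂ P).accepts := by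
  constructor
  · rintro hsat u ⟨q₂, hq₂, hu⟩ ⟨s, ⟨hs₁, hs₂⟩, hs⟩
    obtain ⟨t, ht, hfeas⟩ :=
      feasiblyReaches_of_mem_collapsedParallel_eval hP h₁ hc₁ h₂ hv₂ hc₂ hu hs
    exact hsat t ⟨_, ⟨⟨s.1, hs₁, q₂, hq₂, rfl⟩, hs₂⟩, ht⟩ hfeas
  · rintro h t ⟨x, ⟨⟨q₁, hq₁, q₂, hq₂, hx⟩, hp⟩, ht⟩ -
    obtain ⟨u, hu, hs⟩ := exists_reach_mem_collapsedParallel_eval hP ht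
    rw [hx] at hu hs
    exact h u ⟨q₂, hq₂, hu⟩ ⟨_, ⟨hq₁, hp⟩, hs⟩

end Realization

section TraceProgram

variable {w : List (Action Chan Var D)}

theorem traceProgram_tr_mem_alph {i j : Fin (w.length + 1)} {a : Action Chan Var D}
    (h : (traceProgram w).tr i a j) : a ∈ (traceProgram w).alph := by
  obtain ⟨hi, rfl, -⟩ := h
  exact List.get_mem w _

theorem eq_take_of_reach_traceProgram {i : Fin (w.length + 1)} {u : List (Action Chan Var D)}
    (h : (traceProgram w).Reach i u) : u = w.take i := by
  induction h with
  | nil => rfl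
  | snoc _ hij ih =>
    obtain ⟨hi, rfl, hj⟩ := hij
    rw [ih, hj, List.take_succ_eq_append_getElem hi]
    rfl

theorem reach_traceProgram_take (i : ℕ) (hi : i < w.length + 1) :
    (traceProgram w).Reach ⟨i, hi⟩ (w.take i) := by
  induction i with
  | zero => exact .nil
  | succ i ih =>
    have hi' : i < w.length := by omega
    rw [List.take_succ_eq_append_getElem hi']
    exact (ih (by omega)).snoc ⟨hi', rfl, rfl⟩

theorem accTraces_traceProgram : (traceProgram w).AccTraces = {w} := by
  ext u
  constructor
  · rintro ⟨_, rfl, hu⟩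
    simpa using eq_take_of_reach_traceProgram hu
  · intro hu
    rw [Set.mem_singleton_iff.1 hu]
    have h := reach_traceProgram_take w.length (Nat.lt_succ_self _)
    rw [List.take_length] at h
    exact ⟨_, rfl, h⟩

theorem sat_parallel_traceProgram_iff [Nonempty (Var → D)] {M₁ : Program Q₁ Chan Var D}
    {P : Program QP Chan Var D} (hP : ∀ a ∈ P.alph, a.isComm)
    (h₁ : ∀ a ∈ M₁.alph, a.usesOnly M₁.vars) (hc₁ : ∀ a ∈ M₁.alph, ¬ a.isConstraint)
    (hw : ∀ a ∈ w, ¬ a.isConstraint) :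
    Sat (parallel M₁ (traceProgram w)) P ↔
      w ∉ (collapsedParallel M₁ (traceProgram w) P).accepts := by
  rw [sat_parallel_iff hP h₁ hc₁ (fun _ _ _ => traceProgram_tr_mem_alph)
    (fun a _ => a.usesOnly_univ) hw, accTraces_traceProgram]
  simp

end TraceProgram

theorem isRegularLang_of_isRegular {A : Type} {L : Set (List A)} (h : Language.IsRegular L) :
    IsRegularLang L := by
  obtain ⟨σ, hσ, M, hM⟩ := h
  exact ⟨σ, hσ, M, fun _ => hM ▸ Iff.rfl⟩

theorem weakest_assumption_regular_of_no_constraints_general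
    {Q₁ Q₂ QP Chan Var D : Type} [Finite Q₁] [Finite QP]
    (M₁ : Program Q₁ Chan Var D) (M₂ : Program Q₂ Chan Var D)
    (P : Program QP Chan Var D)
    (h₁ : M₁.Good) (h₂ : M₂.Good) (hP : IsProperty P)
    (hc₁ : ∀ a ∈ M₁.alph, ¬ a.isConstraint)
    (hc₂ : ∀ a ∈ M₂.alph, ¬ a.isConstraint)
    (hcP : ∀ a ∈ P.alph, ¬ a.isConstraint) :
    IsRegularLang {w : List (Action Chan Var D) |
      (∀ a ∈ w, a ∈ M₂.alph) ∧ Sat (parallel M₁ (traceProgram w)) P} := by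
  apply isRegularLang_of_isRegular
  rcases isEmpty_or_nonempty (Var → D) with hD | hD
  · simpa only [sat_of_isEmpty, and_true] using
      Language.isRegular_setOf_forall_mem (· ∈ M₂.alph)
  let A (w : List (Action Chan Var D)) := collapsedParallel M₁ (traceProgram w) P
  have hL : {w | (∀ a ∈ w, a ∈ M₂.alph) ∧ Sat (parallel M₁ (traceProgram w)) P} =
      {w | (∀ a ∈ w, a ∈ M₂.alph) ∧ w ∈ (A w).acceptsᶜ} := by
    ext w
    exact and_congr_right fun hw => sat_parallel_traceProgram_iff
      (fun _ => hP.isComm_of_mem_alph hcP) h₁.2.1 hc₁ fun a ha => hc₂ a (hw a ha)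
  rw [hL]
  refine Language.isRegular_setOf_forall_mem_and_mem h₂.2.2.1 _ (fun u v huv => ?_)
    fun w => (A w).isRegular_accepts.compl
  have halph : (traceProgram u).alph = (traceProgram v).alph := Set.ext huv
  simp only [A, collapsedParallel, interface_congr halph, parallel_alph_congr halph rfl]

/-- Lemma `weakest_reg`: if the alphabets of `P`, `M₁` and
`M₂` contain no constraints, then the weakest assumption
`L(A_w) = { w ∈ (αM₂)* : M₁ ‖ w ⊨ P }` is regular. -/
theorem weakest_assumption_regular_of_no_constraints
    {Q₁ Q₂ QP Chan Var D : Type} [Finite Q₁] [Finite Q₂] [Finite QP]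
    (M₁ : Program Q₁ Chan Var D) (M₂ : Program Q₂ Chan Var D)
    (P : Program QP Chan Var D)
    (h₁ : M₁.Good) (h₂ : M₂.Good) (hPgood : P.Good) (hP : IsProperty P)
    (hc₁ : ∀ a ∈ M₁.alph, ¬ a.isConstraint)
    (hc₂ : ∀ a ∈ M₂.alph, ¬ a.isConstraint)
    (hcP : ∀ a ∈ P.alph, ¬ a.isConstraint) :
    IsRegularLang {w : List (Action Chan Var D) |
      (∀ a ∈ w, a ∈ M₂.alph) ∧ Sat (parallel M₁ (traceProgram w)) P} :=
  weakest_assumption_regular_of_no_constraints_general M₁ M₂ P h₁ h₂ hP hc₁ hc₂ hcP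

end AGR
end

section
/- Let A1, A2 and Ap be finite-state automata such that αAp ⊆ (αA1 ∪ αA2). Then the weakest assumption A_w for A1, A2 and Ap, with language L(A_w) = { w ∈ (αA2)* : A1 || w ⊨ Ap }, is regular. -/
/-!
Finite-state automata viewed as communicating programs without constraints
and without assignments, with the composition operators relaxed so that
components synchronize on all mutual alphabet letters.
-/

open scoped Classical

namespace AGR

/-- A (nondeterministic) finite-state automaton over the letter type `A`,
with state type `Q`: an initial state, a transition relation, a set of
accepting states and an alphabet. -/
structure Aut (A Q : Type) where
  init : Q
  tr : Q → A → Q → Prop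
  acc : Set Q
  alph : Set A

namespace Aut

variable {A Q : Type}

/-- Well-formedness: transitions are labeled by alphabet letters. -/
def WF (M : Aut A Q) : Prop := ∀ q a q', M.tr q a q' → a ∈ M.alph

/-- `M.Reach q w` : there is a run of `M` from the initial state to `q`
reading the word `w`. -/
inductive Reach (M : Aut A Q) : Q → List A → Prop where
  | nil : Reach M M.init []
  | snoc {q : Q} {w : List A} {a : A} {q' : Q} :
      Reach M q w → M.tr q a q' → Reach M q' (w ++ [a])

/-- The language of accepted words of `M`. -/
def AccWords (M : Aut A Q) : Set (List A) :=
  {w | ∃ q ∈ M.acc, M.Reach q w}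

end Aut

/-- Transitions of the (relaxed) composition of two automata: the components
synchronize on all mutual alphabet letters and interleave on all other
letters. -/
inductive AutTrans {A Q₁ Q₂ : Type} (M₁ : Aut A Q₁) (M₂ : Aut A Q₂) :
    Q₁ × Q₂ → A → Q₁ × Q₂ → Prop where
  | sync {q₁ p₁ : Q₁} {q₂ p₂ : Q₂} {a : A} :
      a ∈ M₁.alph → a ∈ M₂.alph → M₁.tr q₁ a p₁ → M₂.tr q₂ a p₂ →
      AutTrans M₁ M₂ (q₁, q₂) a (p₁, p₂)
  | left {q₁ p₁ : Q₁} {q₂ : Q₂} {a : A} :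
      a ∈ M₁.alph → a ∉ M₂.alph → M₁.tr q₁ a p₁ →
      AutTrans M₁ M₂ (q₁, q₂) a (p₁, q₂)
  | right {q₁ : Q₁} {q₂ p₂ : Q₂} {a : A} :
      a ∈ M₂.alph → a ∉ M₁.alph → M₂.tr q₂ a p₂ →
      AutTrans M₁ M₂ (q₁, q₂) a (q₁, p₂)

/-- The parallel composition `M₁ ‖ M₂` of two automata (relaxed
synchronization on mutual letters); accepting states are pairs of accepting
states. -/
def parAut {A Q₁ Q₂ : Type} (M₁ : Aut A Q₁) (M₂ : Aut A Q₂) :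
    Aut A (Q₁ × Q₂) where
  init := (M₁.init, M₂.init)
  tr := AutTrans M₁ M₂
  acc := {s | s.1 ∈ M₁.acc ∧ s.2 ∈ M₂.acc}
  alph := M₁.alph ∪ M₂.alph

/-- The conjunctive composition `M × P` of an automaton and a property
automaton (relaxed synchronization on mutual letters); accepting states are
pairs of an accepting state of `M` and a rejecting state of `P`. -/
def conjAut {A QM QP : Type} (M : Aut A QM) (P : Aut A QP) :
    Aut A (QM × QP) where
  init := (M.init, P.init)
  tr := AutTrans M P
  acc := {s | s.1 ∈ M.acc ∧ s.2 ∉ P.acc}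
  alph := M.alph ∪ P.alph

/-- `M ⊨ P` : the conjunctive composition `M × P` accepts no word
(there are no constraints, so every trace is feasible). -/
def SatAut {A QM QP : Type} (M : Aut A QM) (P : Aut A QP) : Prop :=
  ∀ w : List A, w ∉ (conjAut M P).AccWords

/-- `M_w`: the automaton accepting exactly the word `w`. -/
def wordAut {A : Type} (w : List A) : Aut A (Fin (w.length + 1)) where
  init := 0
  tr := fun i a j =>
    ∃ h : (i : ℕ) < w.length, a = w.get ⟨(i : ℕ), h⟩ ∧ (j : ℕ) = (i : ℕ) + 1
  acc := {Fin.last w.length}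
  alph := {a | a ∈ w}

/-!
Fix `B`, the set of letters of `w`. In `(A₁ ‖ w) × Ap` a letter of `B` can only be read together
with the next letter of `w`, while a letter outside `B` moves `A₁` and `Ap` without advancing in
`w`. Hence the pairs of states of `A₁` and `Ap` reachable at position `i` of `w` are those
computed by the subset construction for `A₁ × Ap` in which the letters outside `B` are hidden
(ε-moves), run on the first `i` letters of `w`. As `B` ranges over the finitely many subsets of
`αA₂`, one DFA can run this construction for every guess `B` at once, record the letters seen,
and decide by the run of the correct guess.
-/

namespace Aut

variable {A Q : Type}

def Move (M : Aut A Q) (a : A) (q q' : Q) : Prop :=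
  (a ∈ M.alph ∧ M.tr q a q') ∨ (a ∉ M.alph ∧ q' = q)

theorem Move.eq_of_notMem {M : Aut A Q} {a : A} {q q' : Q} (h : M.Move a q q')
    (ha : a ∉ M.alph) : q' = q :=
  (h.resolve_left fun h' => ha h'.1).2

end Aut

variable {A Q₁ Q₂ QP : Type}

theorem autTrans_iff {M₁ : Aut A Q₁} {M₂ : Aut A Q₂} {q₁ p₁ : Q₁} {q₂ p₂ : Q₂} {a : A} :
    AutTrans M₁ M₂ (q₁, q₂) a (p₁, p₂) ↔
      M₁.Move a q₁ p₁ ∧ M₂.Move a q₂ p₂ ∧ a ∈ M₁.alph ∪ M₂.alph := by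
  constructor
  · rintro (⟨h₁, h₂, t₁, t₂⟩ | ⟨h₁, h₂, t₁⟩ | ⟨h₂, h₁, t₂⟩)
    · exact ⟨.inl ⟨h₁, t₁⟩, .inl ⟨h₂, t₂⟩, .inl h₁⟩
    · exact ⟨.inl ⟨h₁, t₁⟩, .inr ⟨h₂, rfl⟩, .inl h₁⟩
    · exact ⟨.inr ⟨h₁, rfl⟩, .inl ⟨h₂, t₂⟩, .inr h₂⟩
  · rintro ⟨⟨h₁, t₁⟩ | ⟨h₁, rfl⟩, ⟨h₂, t₂⟩ | ⟨h₂, rfl⟩, h⟩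
    · exact .sync h₁ h₂ t₁ t₂
    · exact .left h₁ h₂ t₁
    · exact .right h₂ h₁ t₂
    · exact absurd h (by simp [h₁, h₂])

theorem Aut.move_parAut {M₁ : Aut A Q₁} {M₂ : Aut A Q₂} {s t : Q₁ × Q₂} {a : A} :
    (parAut M₁ M₂).Move a s t ↔ M₁.Move a s.1 t.1 ∧ M₂.Move a s.2 t.2 := by
  obtain ⟨q₁, q₂⟩ := s
  obtain ⟨p₁, p₂⟩ := t
  by_cases h₁ : a ∈ M₁.alph <;> by_cases h₂ : a ∈ M₂.alph <;>
    simp [Aut.Move, parAut, autTrans_iff, h₁, h₂, and_comm]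

theorem tr_conjAut_parAut_iff {M₁ : Aut A Q₁} {M₂ : Aut A Q₂} {P : Aut A QP}
    {q₁ p₁ : Q₁} {q₂ p₂ : Q₂} {q₃ p₃ : QP} {a : A} :
    (conjAut (parAut M₁ M₂) P).tr ((q₁, q₂), q₃) a ((p₁, p₂), p₃) ↔
      M₁.Move a q₁ p₁ ∧ M₂.Move a q₂ p₂ ∧ P.Move a q₃ p₃ ∧
        (a ∈ M₁.alph ∨ a ∈ M₂.alph ∨ a ∈ P.alph) := by
  simp only [conjAut, autTrans_iff]
  rw [Aut.move_parAut]
  simp only [parAut, Set.mem_union]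
  tauto

section HiddenSubsetConstruction

variable (A₁ : Aut A Q₁) (Ap : Aut A QP)

def jointMove (a : A) (s t : Q₁ × QP) : Prop :=
  A₁.Move a s.1 t.1 ∧ Ap.Move a s.2 t.2

def hiddenStep (B : Set A) (s t : Q₁ × QP) : Prop :=
  ∃ a ∉ B, jointMove A₁ Ap a s t

def hiddenClosure (B : Set A) (S : Set (Q₁ × QP)) : Set (Q₁ × QP) :=
  {t | ∃ s ∈ S, Relation.ReflTransGen (hiddenStep A₁ Ap B) s t}

/-- The subset construction for `A₁ × Ap` in which the letters outside `B` are ε-moves;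
a set of pairs is accepting when it contains no pair violating `Ap`. -/
def guessDFA (B : Set A) : DFA A (Set (Q₁ × QP)) where
  step S a := hiddenClosure A₁ Ap B {t | ∃ s ∈ S, jointMove A₁ Ap a s t}
  start := hiddenClosure A₁ Ap B {(A₁.init, Ap.init)}
  accept := {S | ∀ s ∈ S, s.1 ∈ A₁.acc → s.2 ∈ Ap.acc}

variable {A₁ Ap}

theorem subset_hiddenClosure {B : Set A} {S : Set (Q₁ × QP)} : S ⊆ hiddenClosure A₁ Ap B S :=
  fun s hs => ⟨s, hs, .refl⟩

theorem mem_hiddenClosure_of_hiddenStep {B : Set A} {S : Set (Q₁ × QP)} {s t : Q₁ × QP}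
    (hs : s ∈ hiddenClosure A₁ Ap B S) (h : hiddenStep A₁ Ap B s t) :
    t ∈ hiddenClosure A₁ Ap B S :=
  let ⟨s₀, h₀, r⟩ := hs
  ⟨s₀, h₀, r.tail h⟩

theorem mem_eval_of_hiddenStep {B : Set A} {v : List A} {s t : Q₁ × QP}
    (hs : s ∈ (guessDFA A₁ Ap B).eval v) (h : hiddenStep A₁ Ap B s t) :
    t ∈ (guessDFA A₁ Ap B).eval v := by
  rcases List.eq_nil_or_concat v with rfl | ⟨v, a, rfl⟩
  · exact mem_hiddenClosure_of_hiddenStep hs h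
  · rw [List.concat_eq_append, DFA.eval_append_singleton] at hs ⊢
    exact mem_hiddenClosure_of_hiddenStep hs h

end HiddenSubsetConstruction

section WordComposition

variable {A₁ : Aut A Q₁} {Ap : Aut A QP} {w : List A}

theorem mem_eval_take_of_reach {x : (Q₁ × Fin (w.length + 1)) × QP} {u : List A}
    (h : (conjAut (parAut A₁ (wordAut w)) Ap).Reach x u) :
    (x.1.1, x.2) ∈ (guessDFA A₁ Ap {a | a ∈ w}).eval (w.take x.1.2) := by
  induction h with
  | nil => exact subset_hiddenClosure rfl
  | @snoc x u a y _ t ih =>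
    obtain ⟨⟨q, i⟩, p⟩ := x
    obtain ⟨⟨q', j⟩, p'⟩ := y
    obtain ⟨hq, ⟨-, hi, rfl, hj⟩ | ⟨haw, rfl⟩, hp, -⟩ := tr_conjAut_parAut_iff.mp t
    · have htake : w.take j = w.take i ++ [w[(i : ℕ)]] := by
        rw [hj, List.take_concat_get' w i hi]
      rw [htake, DFA.eval_append_singleton]
      exact subset_hiddenClosure ⟨(q, p), ih, hq, hp⟩
    · exact mem_eval_of_hiddenStep ih ⟨a, haw, hq, hp⟩

theorem reach_of_reflTransGen_hiddenStep {i : Fin (w.length + 1)} {s t : Q₁ × QP}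
    (hs : ∃ u, (conjAut (parAut A₁ (wordAut w)) Ap).Reach ((s.1, i), s.2) u)
    (h : Relation.ReflTransGen (hiddenStep A₁ Ap {a | a ∈ w}) s t) :
    ∃ u, (conjAut (parAut A₁ (wordAut w)) Ap).Reach ((t.1, i), t.2) u := by
  induction h with
  | refl => exact hs
  | @tail b c _ hstep ih =>
    obtain ⟨u, hu⟩ := ih
    obtain ⟨a, haw, hq, hp⟩ := hstep
    by_cases ha : a ∈ A₁.alph ∨ a ∈ Ap.alph
    · exact ⟨u ++ [a], hu.snoc
        (tr_conjAut_parAut_iff.mpr ⟨hq, .inr ⟨haw, rfl⟩, hp, ha.imp_right .inr⟩)⟩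
    · rw [not_or] at ha
      rw [Prod.ext (hq.eq_of_notMem ha.1) (hp.eq_of_notMem ha.2)]
      exact ⟨u, hu⟩

theorem reach_of_mem_eval_take :
    ∀ (i : ℕ) (hi : i ≤ w.length), ∀ s ∈ (guessDFA A₁ Ap {a | a ∈ w}).eval (w.take i),
      ∃ u, (conjAut (parAut A₁ (wordAut w)) Ap).Reach ((s.1, ⟨i, Nat.lt_succ_of_le hi⟩), s.2) u
  | 0, _, _, ⟨s₀, h₀, r⟩ => by
    obtain rfl : s₀ = (A₁.init, Ap.init) := h₀
    exact reach_of_reflTransGen_hiddenStep ⟨[], .nil⟩ r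
  | i + 1, hi, s, hs => by
    rw [← List.take_concat_get' w i hi, DFA.eval_append_singleton] at hs
    obtain ⟨t, ⟨s₀, h₀, hq, hp⟩, r⟩ := hs
    obtain ⟨u, hu⟩ := reach_of_mem_eval_take i (Nat.le_of_succ_le hi) s₀ h₀
    refine reach_of_reflTransGen_hiddenStep ⟨u ++ [w[i]], hu.snoc ?_⟩ r
    have hmem : w[i] ∈ w := List.getElem_mem hi
    exact tr_conjAut_parAut_iff.mpr ⟨hq, .inl ⟨hmem, hi, rfl, rfl⟩, hp, .inr (.inl hmem)⟩

theorem satAut_parAut_wordAut_iff :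
    SatAut (parAut A₁ (wordAut w)) Ap ↔ w ∈ (guessDFA A₁ Ap {a | a ∈ w}).accepts := by
  rw [DFA.mem_accepts]
  constructor
  · intro hsat s hs hacc
    by_contra hrej
    obtain ⟨u, hu⟩ := reach_of_mem_eval_take w.length le_rfl s (by rwa [List.take_length])
    exact hsat u ⟨_, ⟨⟨hacc, Set.mem_singleton _⟩, hrej⟩, hu⟩
  · rintro hgood u ⟨⟨⟨q, i⟩, p⟩, ⟨⟨hacc, hlast⟩, hrej⟩, hu⟩
    have hi : i = Fin.last w.length := hlast
    subst hi
    have := mem_eval_take_of_reach hu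
    rw [Fin.val_last, List.take_length] at this
    exact hrej (hgood _ this hacc)

end WordComposition

noncomputable section AllGuesses

variable (A₁ : Aut A Q₁) (Ap : Aut A QP) (S : Set A)

def lettersIn (w : List A) : Option (Set S) :=
  if ∀ a ∈ w, a ∈ S then some (Subtype.val ⁻¹' {a | a ∈ w}) else none

def insertLetter (a : A) (x : Option (Set S)) : Option (Set S) :=
  x.bind fun B => if h : a ∈ S then some (insert ⟨a, h⟩ B) else none

theorem lettersIn_append_singleton (w : List A) (a : A) :
    lettersIn S (w ++ [a]) = insertLetter S a (lettersIn S w) := by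
  unfold lettersIn insertLetter
  by_cases hw : ∀ b ∈ w, b ∈ S
  · by_cases ha : a ∈ S
    · have hwa : ∀ b ∈ w ++ [a], b ∈ S := List.forall_mem_append.mpr ⟨hw, by simpa using ha⟩
      rw [if_pos hwa, if_pos hw, Option.bind_some, dif_pos ha]
      refine congrArg some (Set.ext fun b => ?_)
      simp [or_comm, Subtype.ext_iff]
    · rw [if_neg fun h => ha (h a (by simp)), if_pos hw, Option.bind_some, dif_neg ha]
  · rw [if_neg fun h => hw fun b hb => h b (by simp [hb]), if_neg hw, Option.bind_none]

/-- Runs `guessDFA A₁ Ap B` for every guess `B ⊆ S` of the set of letters of the input, tracks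
that set, and accepts according to the run of the correct guess. -/
def weakestAssumptionDFA : DFA A (Option (Set S) × (Set S → Set (Q₁ × QP))) where
  step x a := (insertLetter S a x.1, fun B => (guessDFA A₁ Ap (Subtype.val '' B)).step (x.2 B) a)
  start := (some ∅, fun B => (guessDFA A₁ Ap (Subtype.val '' B)).start)
  accept := {x | ∃ B, x.1 = some B ∧ x.2 B ∈ (guessDFA A₁ Ap (Subtype.val '' B)).accept}

theorem weakestAssumptionDFA_eval (w : List A) :
    (weakestAssumptionDFA A₁ Ap S).eval w =
      (lettersIn S w, fun B => (guessDFA A₁ Ap (Subtype.val '' B)).eval w) := by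
  induction w using List.reverseRecOn with
  | nil => simp [weakestAssumptionDFA, lettersIn]
  | append_singleton w a ih =>
    simp only [DFA.eval_append_singleton, ih, lettersIn_append_singleton]
    rfl

theorem mem_weakestAssumptionDFA_accepts {w : List A} :
    w ∈ (weakestAssumptionDFA A₁ Ap S).accepts ↔
      (∀ a ∈ w, a ∈ S) ∧ w ∈ (guessDFA A₁ Ap {a | a ∈ w}).accepts := by
  rw [DFA.mem_accepts, weakestAssumptionDFA_eval]
  by_cases hw : ∀ a ∈ w, a ∈ S
  · have hletters : Subtype.val '' (Subtype.val ⁻¹' {a | a ∈ w} : Set S) = {a | a ∈ w} := by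
      rw [Subtype.image_preimage_coe, Set.inter_eq_right]
      exact hw
    constructor
    · rintro ⟨B, hB, hacc⟩
      obtain rfl : Subtype.val ⁻¹' {a | a ∈ w} = B :=
        Option.some_injective _ ((if_pos hw).symm.trans hB)
      exact ⟨hw, hletters ▸ hacc⟩
    · rintro ⟨-, hacc⟩
      refine ⟨_, if_pos hw, ?_⟩
      dsimp only
      rwa [hletters]
  · simp [weakestAssumptionDFA, lettersIn, hw]

end AllGuesses

theorem weakest_assumption_regular_automata_general
    {A Q₁ Q₂ QP : Type} [Finite Q₁] [Finite QP]
    (A₁ : Aut A Q₁) (A₂ : Aut A Q₂) (Ap : Aut A QP)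
    (hfin₂ : A₂.alph.Finite) :
    IsRegularLang {w : List A |
      (∀ a ∈ w, a ∈ A₂.alph) ∧ SatAut (parAut A₁ (wordAut w)) Ap} := by
  have : Finite A₂.alph := hfin₂.to_subtype
  refine ⟨_, Fintype.ofFinite _, weakestAssumptionDFA A₁ Ap A₂.alph, fun w => ?_⟩
  rw [mem_weakestAssumptionDFA_accepts, Set.mem_ofPred_eq, satAut_parAut_wordAut_iff]

/-- let `A₁`, `A₂` and `Ap` be finite-state automata with
`αAp ⊆ αA₁ ∪ αA₂`, where `Ap` is deterministic and complete.  Then the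
weakest assumption `L(A_w) = { w ∈ (αA₂)* : A₁ ‖ w ⊨ Ap }` is regular. -/
theorem weakest_assumption_regular_automata
    {A Q₁ Q₂ QP : Type} [Finite Q₁] [Finite Q₂] [Finite QP]
    (A₁ : Aut A Q₁) (A₂ : Aut A Q₂) (Ap : Aut A QP)
    (h₁ : A₁.WF) (h₂ : A₂.WF) (hp : Ap.WF)
    (hfin₁ : A₁.alph.Finite) (hfin₂ : A₂.alph.Finite) (hfinP : Ap.alph.Finite)
    (halph : Ap.alph ⊆ A₁.alph ∪ A₂.alph)
    (hdetcomp : ∀ q : QP, ∀ a ∈ Ap.alph, ∃! q' : QP, Ap.tr q a q') :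
    IsRegularLang {w : List A |
      (∀ a ∈ w, a ∈ A₂.alph) ∧ SatAut (parAut A₁ (wordAut w)) Ap} :=
  weakest_assumption_regular_automata_general A₁ A₂ Ap hfin₂

end AGR
end
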